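/- Let f : [0,1]^P → ℝ be twice continuously differentiable with ‖∇²f(x)‖ ≤ H for all x. Let a box B = [l,u] ⊆ [0,1]^P be split at threshold τ along coordinate p into children B_l and B_r, and let μ_l, μ_r be the averages of f under the uniform distributions on B_l and B_r respectively. Then |2(μ_r − μ_l)/(u_p − l_p) − ∂f/∂x_p(x)| ≤ 2H·‖u − l‖²/(u_p − l_p) for every x ∈ B. -/

import Mathlib

/-!
Second-order Taylor expansion at `x` bounds the error of replacing `f` on a child box by the
affine map `f x + Df(x)(· - x)` by `H/2 · ‖z - x‖²`, and averaging that affine map over a box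
evaluates it at the box's midpoint. The midpoints of the two children differ by
`(u_p - l_p)/2 · e_p`, so the difference of the two averages is `(u_p - l_p)/2 · ∂f/∂x_p(x)`
up to twice the Taylor error.
-/

open MeasureTheory Set

section Taylor

variable {E F : Type*} [NormedAddCommGroup E] [NormedSpace ℝ E]
  [NormedAddCommGroup F] [NormedSpace ℝ F] {f : E → F} {s : Set E} {H : ℝ}

theorem Convex.norm_fderiv_sub_le_of_norm_iteratedFDeriv_two_le (hs : Convex ℝ s)
    (hf : ContDiff ℝ 2 f) (hH : ∀ y ∈ s, ‖iteratedFDeriv ℝ 2 f y‖ ≤ H) {a b : E}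
    (ha : a ∈ s) (hb : b ∈ s) :
    ‖fderiv ℝ f a - fderiv ℝ f b‖ ≤ H * ‖a - b‖ := by
  have hdf : ContDiff ℝ 1 (fderiv ℝ f) := hf.fderiv_right le_rfl
  refine hs.norm_image_sub_le_of_norm_fderiv_le
    (fun y _ => (hdf.differentiable one_ne_zero).differentiableAt) (fun y hy => ?_) hb ha
  rw [← norm_iteratedFDeriv_one, norm_iteratedFDeriv_fderiv]
  exact hH y hy

theorem Convex.norm_image_sub_sub_fderiv_le_of_norm_iteratedFDeriv_two_le (hs : Convex ℝ s)
    (hf : ContDiff ℝ 2 f) (hH : ∀ y ∈ s, ‖iteratedFDeriv ℝ 2 f y‖ ≤ H) {x z : E}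
    (hx : x ∈ s) (hz : z ∈ s) :
    ‖f z - f x - fderiv ℝ f x (z - x)‖ ≤ H / 2 * ‖z - x‖ ^ 2 := by
  set v := z - x
  have hdiff : Differentiable ℝ f := hf.differentiable two_ne_zero
  have hg : ∀ t : ℝ, HasDerivAt (fun t : ℝ => f (x + t • v) - f x - t • fderiv ℝ f x v)
      (fderiv ℝ f (x + t • v) v - fderiv ℝ f x v) t := fun t => by
    have hline : HasDerivAt (fun t : ℝ => x + t • v) v t := by
      simpa using ((hasDerivAt_id t).smul_const v).const_add x
    exact (((hdiff _).hasFDerivAt.comp_hasDerivAt t hline).sub_const (f x)).sub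
      (by simpa using (hasDerivAt_id t).smul_const (fderiv ℝ f x v))
  have hB : ∀ t : ℝ, HasDerivAt (fun t : ℝ => H / 2 * ‖v‖ ^ 2 * t ^ 2) (H * ‖v‖ ^ 2 * t) t :=
    fun t => ((hasDerivAt_pow 2 t).const_mul (H / 2 * ‖v‖ ^ 2)).congr_deriv (by ring)
  have bound : ∀ t ∈ Ico (0 : ℝ) 1,
      ‖fderiv ℝ f (x + t • v) v - fderiv ℝ f x v‖ ≤ H * ‖v‖ ^ 2 * t := fun t ht => by
    have hxt : x + t • v ∈ s := hs.add_smul_sub_mem hx hz ⟨ht.1, ht.2.le⟩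
    calc ‖fderiv ℝ f (x + t • v) v - fderiv ℝ f x v‖
        ≤ ‖fderiv ℝ f (x + t • v) - fderiv ℝ f x‖ * ‖v‖ :=
          (fderiv ℝ f (x + t • v) - fderiv ℝ f x).le_opNorm v
      _ ≤ H * ‖x + t • v - x‖ * ‖v‖ := by
          gcongr
          exact hs.norm_fderiv_sub_le_of_norm_iteratedFDeriv_two_le hf hH hxt hx
      _ = H * ‖v‖ ^ 2 * t := by
          rw [add_sub_cancel_left, norm_smul, Real.norm_of_nonneg ht.1]; ring
  have := image_norm_le_of_norm_deriv_right_le_deriv_boundary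
    (fun t _ => (hg t).continuousAt.continuousWithinAt) (fun t _ => (hg t).hasDerivWithinAt)
    (by simp) hB bound (right_mem_Icc.2 zero_le_one)
  simpa [v] using this

end Taylor

section Box

variable {ι : Type*} [Fintype ι]

theorem sq_norm_sub_le_sum_sq_of_mem_Icc {l u x z : ι → ℝ} (hx : x ∈ Icc l u)
    (hz : z ∈ Icc l u) : ‖z - x‖ ^ 2 ≤ ∑ q, (u q - l q) ^ 2 := by
  refine (Real.le_sqrt (norm_nonneg _) (by positivity)).1 <|
    (pi_norm_le_iff_of_nonneg (Real.sqrt_nonneg _)).2 fun q => Real.abs_le_sqrt ?_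
  have := hx.1 q; have := hx.2 q; have := hz.1 q; have := hz.2 q
  calc (z - x) q ^ 2 ≤ (u q - l q) ^ 2 := by
        rw [Pi.sub_apply]; exact sq_le_sq' (by linarith) (by linarith)
    _ ≤ ∑ q, (u q - l q) ^ 2 :=
        Finset.single_le_sum (f := fun q => (u q - l q) ^ 2) (fun _ _ => sq_nonneg _)
          (Finset.mem_univ q)

theorem volume_Icc_pi_ne_zero {a b : ι → ℝ} (hab : ∀ q, a q < b q) :
    volume (Icc a b) ≠ 0 := by
  simp [Real.volume_Icc_pi, Finset.prod_ne_zero_iff, hab]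

theorem setIntegral_Icc_id_eq_smul_midpoint (a b : ι → ℝ) :
    ∫ z in Icc a b, z = volume.real (Icc a b) • midpoint ℝ a b := by
  have hint : IntegrableOn (fun z => z) (Icc a b) := Continuous.integrableOn_Icc continuous_id
  have hreflect : ∫ z in Icc a b, (a + b - z) = ∫ z in Icc a b, z := by
    have hpre : (fun z => a + b - z) ⁻¹' Icc a b = Icc a b := by simp
    conv_lhs => rw [← hpre]
    exact (Measure.measurePreserving_sub_left volume (a + b)).setIntegral_preimage_emb
      (MeasurableEquiv.subLeft (a + b)).measurableEmbedding (fun z => z) (Icc a b)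
  rw [integral_sub (integrableOn_const (C := a + b) isCompact_Icc.measure_lt_top.ne) hint,
    setIntegral_const] at hreflect
  rw [midpoint_eq_smul_add, invOf_eq_inv]
  linear_combination (norm := module) (-(2⁻¹ : ℝ)) • hreflect

variable {F : Type*} [NormedAddCommGroup F] [NormedSpace ℝ F] [CompleteSpace F]

theorem norm_setAverage_Icc_sub_affine_le {f : (ι → ℝ) → F} {a b : ι → ℝ}
    (hf : IntegrableOn f (Icc a b)) (hab : volume (Icc a b) ≠ 0) (L : (ι → ℝ) →L[ℝ] F)
    (x : ι → ℝ) {C : ℝ} (hC : ∀ z ∈ Icc a b, ‖f z - f x - L (z - x)‖ ≤ C) :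
    ‖(⨍ z in Icc a b, f z) - (f x + L (midpoint ℝ a b - x))‖ ≤ C := by
  have hfin : volume (Icc a b) ≠ ⊤ := isCompact_Icc.measure_lt_top.ne
  have hV : 0 < volume.real (Icc a b) := ENNReal.toReal_pos hab hfin
  have hz : IntegrableOn (fun z => z) (Icc a b) := Continuous.integrableOn_Icc continuous_id
  have hid : IntegrableOn (fun z => z - x) (Icc a b) := hz.sub (integrableOn_const hfin)
  have hfx : IntegrableOn (fun z => f z - f x) (Icc a b) := hf.sub (integrableOn_const hfin)
  have hint : ∫ z in Icc a b, (f z - f x - L (z - x)) =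
      volume.real (Icc a b) • ((⨍ z in Icc a b, f z) - (f x + L (midpoint ℝ a b - x))) := by
    rw [integral_sub hfx (L.integrable_comp hid), integral_sub hf (integrableOn_const hfin),
      L.integral_comp_comm hid, integral_sub hz (integrableOn_const hfin), setIntegral_const,
      setIntegral_const, setIntegral_Icc_id_eq_smul_midpoint, ← measure_smul_setAverage _ hfin]
    simp only [map_sub, map_smul, smul_sub, smul_add]
    abel
  have := norm_setIntegral_le_of_norm_le_const hfin.lt_top hC
  rw [hint, norm_smul, Real.norm_of_nonneg hV.le, mul_comm] at this
  exact le_of_mul_le_mul_right this hV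

theorem Convex.norm_setAverage_Icc_sub_le_of_norm_iteratedFDeriv_two_le {s : Set (ι → ℝ)}
    (hs : Convex ℝ s) {f : (ι → ℝ) → F} (hf : ContDiff ℝ 2 f) {H : ℝ}
    (hH : ∀ y ∈ s, ‖iteratedFDeriv ℝ 2 f y‖ ≤ H) {l u a b x : ι → ℝ} (hlu : Icc l u ⊆ s)
    (hab : Icc a b ⊆ Icc l u) (hab' : ∀ q, a q < b q) (hx : x ∈ Icc l u) :
    ‖(⨍ z in Icc a b, f z) - (f x + fderiv ℝ f x (midpoint ℝ a b - x))‖ ≤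
      H / 2 * ∑ q, (u q - l q) ^ 2 := by
  have hH0 : 0 ≤ H := (norm_nonneg _).trans (hH x (hlu hx))
  refine norm_setAverage_Icc_sub_affine_le hf.continuous.integrableOn_Icc
    (volume_Icc_pi_ne_zero hab') _ x fun z hz => ?_
  calc ‖f z - f x - fderiv ℝ f x (z - x)‖ ≤ H / 2 * ‖z - x‖ ^ 2 :=
        hs.norm_image_sub_sub_fderiv_le_of_norm_iteratedFDeriv_two_le hf hH (hlu hx)
          (hlu (hab hz))
    _ ≤ H / 2 * ∑ q, (u q - l q) ^ 2 := by
        gcongr; exact sq_norm_sub_le_sum_sq_of_mem_Icc hx (hab hz)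

end Box

theorem midpoint_update_sub_midpoint_update {ι : Type*} [DecidableEq ι] (l u : ι → ℝ) (p : ι)
    (τ : ℝ) : midpoint ℝ (Function.update l p τ) u - midpoint ℝ l (Function.update u p τ) =
      ((u p - l p) / 2) • Pi.single p 1 := by
  ext q
  rcases eq_or_ne q p with rfl | h
  · simp [midpoint_eq_smul_add]; ring
  · simp [midpoint_eq_smul_add, h]

/-- Finite-difference-like estimate from a split node.  If `f` is `C²` on `[0,1]^P` with
Hessian operator norm bounded by `H`, the box `B = [l,u] ⊆ [0,1]^P` is split at `τ` along
coordinate `p` into children `B_l` (with `p`-th interval `[l_p, τ]`) and `B_r` (with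
`[τ, u_p]`), and `μ_l, μ_r` are the uniform averages of `f` over the children, then for every
`x ∈ B`, `|2(μ_r − μ_l)/(u_p − l_p) − ∂f/∂x_p(x)| ≤ 2H‖u − l‖²/(u_p − l_p)`. -/
theorem tree_split_partial_deriv_bound {P : ℕ} (f : (Fin P → ℝ) → ℝ)
    (hf : ContDiff ℝ 2 f) (H : ℝ)
    (hH : ∀ x ∈ Set.Icc (0 : Fin P → ℝ) 1, ‖iteratedFDeriv ℝ 2 f x‖ ≤ H)
    (l u : Fin P → ℝ) (hbox : Set.Icc l u ⊆ Set.Icc (0 : Fin P → ℝ) 1)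
    (hlu : ∀ q, l q < u q) (p : Fin P) (τ : ℝ) (hτ₁ : l p < τ) (hτ₂ : τ < u p)
    (x : Fin P → ℝ) (hx : x ∈ Set.Icc l u) :
    |2 * ((⨍ z in Set.Icc (Function.update l p τ) u, f z) -
          (⨍ z in Set.Icc l (Function.update u p τ), f z)) / (u p - l p)
        - fderiv ℝ f x (Pi.single p 1)| ≤
      2 * H * (∑ q, (u q - l q) ^ 2) / (u p - l p) := by
  set D := ∑ q, (u q - l q) ^ 2
  set L := fderiv ℝ f x
  set Ar := ⨍ z in Icc (Function.update l p τ) u, f z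
  set Al := ⨍ z in Icc l (Function.update u p τ), f z
  have hr := (convex_Icc (0 : Fin P → ℝ) 1).norm_setAverage_Icc_sub_le_of_norm_iteratedFDeriv_two_le
    hf hH hbox (Icc_subset_Icc (le_update_iff.2 ⟨hτ₁.le, fun _ _ => le_rfl⟩) le_rfl)
    (fun q => by rcases eq_or_ne q p with rfl | h <;> simp [*]) hx
  have hl := (convex_Icc (0 : Fin P → ℝ) 1).norm_setAverage_Icc_sub_le_of_norm_iteratedFDeriv_two_le
    hf hH hbox (Icc_subset_Icc le_rfl (update_le_iff.2 ⟨hτ₂.le, fun _ _ => le_rfl⟩))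
    (fun q => by rcases eq_or_ne q p with rfl | h <;> simp [*]) hx
  have hmid : L (midpoint ℝ (Function.update l p τ) u - x)
      - L (midpoint ℝ l (Function.update u p τ) - x) = (u p - l p) / 2 * L (Pi.single p 1) := by
    rw [← map_sub, sub_sub_sub_cancel_right, midpoint_update_sub_midpoint_update, map_smul,
      smul_eq_mul]
  have hdiff : |(Ar - Al) - (u p - l p) / 2 * L (Pi.single p 1)| ≤ H * D := by
    rw [← hmid]
    calc _ = |(Ar - (f x + L (midpoint ℝ (Function.update l p τ) u - x)))
          - (Al - (f x + L (midpoint ℝ l (Function.update u p τ) - x)))| := by ring_nf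
      _ ≤ H / 2 * D + H / 2 * D := (abs_sub _ _).trans (add_le_add hr hl)
      _ = H * D := by ring
  have hd : 0 < u p - l p := sub_pos.2 (hlu p)
  calc _ = 2 / (u p - l p) * |(Ar - Al) - (u p - l p) / 2 * L (Pi.single p 1)| := by
        rw [← abs_of_pos (div_pos two_pos hd), ← abs_mul]
        congr 1
        field_simp
    _ ≤ 2 / (u p - l p) * (H * D) := by gcongr
    _ = 2 * H * D / (u p - l p) := by ring
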